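/- arXiv:math/0402458 — 2 statements merged into one kernel-verified Lean document; each statement's English description precedes it below -/
import Mathlib

section
/- Let n be an odd positive integer with binary expansion of length k, satisfying B(n^2) = 2·B(n) - 1. Then for every ν ≥ k + 2, the number 2^ν·n - 1 is a (2,1,2)-number, i.e., B(2^ν·n - 1) = B((2^ν·n - 1)^2). -/
def B (n : ℕ) : ℕ := (Nat.digits 2 n).sum

lemma Btwo (m : ℕ) : B (2 * m) = B m := by
  rcases Nat.eq_zero_or_pos m with rfl | hm
  · simp [B]
  · unfold B
    rw [Nat.digits_def' (by norm_num : (1:ℕ) < 2) (by omega)]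
    simp [Nat.mul_div_cancel_left _ (by norm_num : (0:ℕ) < 2)]

lemma Bodd (m : ℕ) : B (2 * m + 1) = B m + 1 := by
  unfold B
  rw [Nat.digits_def' (by norm_num : (1:ℕ) < 2) (by omega)]
  have h1 : (2 * m + 1) % 2 = 1 := by omega
  have h2 : (2 * m + 1) / 2 = m := by omega
  rw [h1, h2]
  simp [add_comm]

lemma Blen {b t : ℕ} (h : b < 2 ^ t) : (Nat.digits 2 b).length ≤ t := by
  rcases Nat.eq_zero_or_pos b with rfl | hb
  · simp
  · rw [Nat.digits_len 2 b (by norm_num) (by omega)]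
    have := Nat.log_lt_of_lt_pow (by omega : b ≠ 0) h
    omega

lemma Badd (a b t : ℕ) (hb : b < 2 ^ t) : B (2 ^ t * a + b) = B a + B b := by
  rcases Nat.eq_zero_or_pos a with rfl | ha
  · simp [B]
  · have hlen : (Nat.digits 2 b).length ≤ t := Blen hb
    obtain ⟨c, hc⟩ : ∃ c, t = (Nat.digits 2 b).length + c := ⟨t - (Nat.digits 2 b).length, by omega⟩
    have := Nat.digits_append_zeroes_append_digits (b := 2) (k := c) (m := a) (n := b)
      (by norm_num) ha
    unfold B
    rw [add_comm (2 ^ t * a) b, hc, ← this]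
    simp [add_comm]

lemma Bpow_sub_one (t : ℕ) : B (2 ^ t - 1) = t := by
  induction t with
  | zero => simp [B]
  | succ t ih =>
    have h1 : 1 ≤ 2 ^ t := Nat.one_le_two_pow
    have h2 : 2 ^ (t + 1) - 1 = 2 * (2 ^ t - 1) + 1 := by
      rw [pow_succ]; omega
    rw [h2, Bodd, ih]

lemma Bcompl (w : ℕ) : ∀ n, n < 2 ^ w → B (2 ^ w - 1 - n) + B n = w := by
  induction w with
  | zero => intro n hn; interval_cases n; simp [B]
  | succ w ih =>
    intro n hn
    have hp : 2 ^ (w + 1) = 2 * 2 ^ w := by rw [pow_succ]; ring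
    have h1 : 1 ≤ 2 ^ w := Nat.one_le_two_pow
    rcases Nat.even_or_odd n with ⟨m, hm⟩ | ⟨m, hm⟩
    · have hmw : m < 2 ^ w := by omega
      have he : 2 ^ (w + 1) - 1 - n = 2 * (2 ^ w - 1 - m) + 1 := by omega
      have hn2 : n = 2 * m := by omega
      rw [he, hn2, Bodd, Btwo]
      have := ih m hmw
      omega
    · have hmw : m < 2 ^ w := by omega
      have he : 2 ^ (w + 1) - 1 - n = 2 * (2 ^ w - 1 - m) := by omega
      have hn2 : n = 2 * m + 1 := by omega
      rw [he, hn2, Bodd, Btwo]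
      have := ih m hmw
      omega

lemma Bsub (w n : ℕ) (hodd : Odd n) (hn : n < 2 ^ w) :
    B (2 ^ w - n) + B n = w + 1 := by
  obtain ⟨m, hm⟩ := hodd
  have hm' : n = 2 * m + 1 := by omega
  have h2m : 2 * m < 2 ^ w := by omega
  have he : 2 ^ w - n = 2 ^ w - 1 - 2 * m := by omega
  have := Bcompl w (2 * m) h2m
  rw [Btwo] at this
  rw [he, hm', Bodd]
  omega

theorem stmt_10 (n k ν : ℕ) (hodd : Odd n)
    (hk1 : 2 ^ (k - 1) ≤ n) (hk2 : n < 2 ^ k)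
    (hB : B (n ^ 2) = 2 * B n - 1)
    (hν : k + 2 ≤ ν) :
    B (2 ^ ν * n - 1) = B ((2 ^ ν * n - 1) ^ 2) := by
  obtain ⟨m, hm⟩ := hodd
  have hm' : n = 2 * m + 1 := by omega
  have hn1 : 1 ≤ n := by omega
  obtain ⟨w, rfl⟩ : ∃ w, ν = w + 1 := ⟨ν - 1, by omega⟩
  have hkw : 2 ^ k ≤ 2 ^ w := Nat.pow_le_pow_right (by norm_num) (by omega)
  have hnw : n < 2 ^ w := lt_of_lt_of_le hk2 hkw
  have h1w : 1 ≤ 2 ^ w := Nat.one_le_two_pow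
  -- B of the left side
  have hν1 : (1:ℕ) ≤ 2 ^ (w + 1) := Nat.one_le_two_pow
  have eL : 2 ^ (w + 1) * n - 1 = 2 ^ (w + 1) * (n - 1) + (2 ^ (w + 1) - 1) := by
    have : 2 ^ (w + 1) * (n - 1) = 2 ^ (w + 1) * n - 2 ^ (w + 1) := by
      rw [Nat.mul_sub, mul_one]
    rw [this]
    have : 2 ^ (w + 1) ≤ 2 ^ (w + 1) * n := Nat.le_mul_of_pos_right _ (by omega)
    omega
  have hL : B (2 ^ (w + 1) * n - 1) = B (n - 1) + (w + 1) := by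
    rw [eL, Badd _ _ _ (by omega), Bpow_sub_one]
  -- B of (n-1)
  have hBn1 : B (n - 1) + 1 = B n := by
    have : n - 1 = 2 * m := by omega
    rw [this, Btwo, hm', Bodd]
  -- the square
  have hnn2 : n ≤ 2 ^ w * n ^ 2 := by nlinarith
  have eR : (2 ^ (w + 1) * n - 1) ^ 2 = 2 ^ (w + 2) * (2 ^ w * n ^ 2 - n) + 1 := by
    have h2 : 1 ≤ 2 ^ (w + 1) * n := by
      calc 1 ≤ 2 ^ (w + 1) := hν1
      _ ≤ 2 ^ (w + 1) * n := Nat.le_mul_of_pos_right _ (by omega)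
    zify [h2, hnn2]
    ring
  have hR1 : B ((2 ^ (w + 1) * n - 1) ^ 2) = B (2 ^ w * n ^ 2 - n) + 1 := by
    rw [eR, Badd _ _ _ (Nat.one_lt_two_pow (by omega))]
    simp [B]
  -- split the inner term
  have hn2pos : 1 ≤ n ^ 2 := by nlinarith
  have eI : 2 ^ w * n ^ 2 - n = 2 ^ w * (n ^ 2 - 1) + (2 ^ w - n) := by
    zify [hnn2, hn2pos, le_of_lt hnw]
    ring
  have hI : B (2 ^ w * n ^ 2 - n) = B (n ^ 2 - 1) + B (2 ^ w - n) := by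
    rw [eI, Badd _ _ _ (by omega)]
  -- B (n^2 - 1)
  have hodd2 : Odd (n ^ 2) := by
    rw [hm']; exact ⟨2 * m ^ 2 + 2 * m, by ring⟩
  obtain ⟨q, hq⟩ := hodd2
  have hq' : n ^ 2 - 1 = 2 * q := by omega
  have hBsq : B (n ^ 2 - 1) + 1 = B (n ^ 2) := by
    rw [hq', Btwo, hq, show 2 * q + 1 = 2 * q + 1 from rfl, Bodd]
  -- B (2^w - n)
  have hBsub : B (2 ^ w - n) + B n = w + 1 := Bsub w n ⟨m, hm⟩ hnw
  have hBnpos : 1 ≤ B n := by rw [hm', Bodd]; omega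
  omega
end

section
/- Let n be an odd positive integer and m = 2^h - 1 with n < m. If ν ≥ 2h + 1, then B(n·2^ν - m) = B(n) + ν - h and B((n·2^ν - m)^2) = B(n^2) + ν - 1. -/
lemma B_bit (q r : ℕ) (hr : r ≤ 1) : B (2 * q + r) = B q + r := by
  rcases Nat.eq_zero_or_pos (2 * q + r) with h | h
  · have hq : q = 0 := by omega
    have hr0 : r = 0 := by omega
    simp [hq, hr0, B]
  · unfold B
    rw [Nat.digits_def' (by norm_num : 1 < 2) h]
    simp only [List.sum_cons]
    have h1 : (2 * q + r) % 2 = r := by omega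
    have h2 : (2 * q + r) / 2 = q := by omega
    rw [h1, h2]
    omega

lemma B_half (b : ℕ) : B b = B (b / 2) + b % 2 := by
  conv_lhs => rw [show b = 2 * (b / 2) + b % 2 from by omega]
  exact B_bit _ _ (by omega)

lemma B_split (a k : ℕ) : ∀ b, b < 2 ^ k → B (a * 2 ^ k + b) = B a + B b := by
  induction k with
  | zero =>
    intro b hb
    interval_cases b
    simp [B]
  | succ k ih =>
    intro b hb
    have hp : 2 ^ (k + 1) = 2 * 2 ^ k := by ring
    have key : a * 2 ^ (k + 1) + b = 2 * (a * 2 ^ k + b / 2) + b % 2 := by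
      have h1 : a * 2 ^ (k + 1) = 2 * (a * 2 ^ k) := by ring
      omega
    rw [key, B_bit _ _ (by omega), ih (b / 2) (by omega)]
    have := B_half b
    omega

lemma B_pow_sub_one : ∀ k, B (2 ^ k - 1) = k := by
  intro k
  induction k with
  | zero => simp [B]
  | succ k ih =>
    have hp : 2 ^ (k + 1) = 2 * 2 ^ k := by ring
    have h1 : 1 ≤ 2 ^ k := Nat.one_le_two_pow
    have key : 2 ^ (k + 1) - 1 = 2 * (2 ^ k - 1) + 1 := by omega
    rw [key, B_bit _ _ (by omega), ih]

lemma B_compl : ∀ k, ∀ x, x < 2 ^ k → B x + B (2 ^ k - 1 - x) = k := by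
  intro k
  induction k with
  | zero => intro x hx; interval_cases x; simp [B]
  | succ k ih =>
    intro x hx
    have hp : 2 ^ (k + 1) = 2 * 2 ^ k := by ring
    have h1 : 1 ≤ 2 ^ k := Nat.one_le_two_pow
    have key : 2 ^ (k + 1) - 1 - x = 2 * (2 ^ k - 1 - x / 2) + (1 - x % 2) := by omega
    rw [key, B_bit _ _ (by omega)]
    have h2 := B_half x
    have h3 := ih (x / 2) (by omega)
    omega

lemma B_odd (n : ℕ) (h : Odd n) : B n = B (n - 1) + 1 := by
  obtain ⟨q, rfl⟩ := h
  rw [show 2 * q + 1 - 1 = 2 * q + 0 from by omega, B_bit _ _ (by omega),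
    B_bit _ _ (by omega)]
  omega

theorem stmt_11 (n h ν : ℕ) (hodd : Odd n) (hn : n < 2 ^ h - 1)
    (hν : 2 * h + 1 ≤ ν) :
    (B (n * 2 ^ ν - (2 ^ h - 1)) : ℤ) = (B n : ℤ) + ν - h ∧
    B ((n * 2 ^ ν - (2 ^ h - 1)) ^ 2) = B (n ^ 2) + ν - 1 := by
  have hn1 : 1 ≤ n := hodd.pos
  have hh : 2 ≤ h := by
    by_contra hcon
    interval_cases h <;> simp_all
  -- power facts
  have pb : (4 : ℕ) ≤ 2 ^ h := by
    calc (4:ℕ) = 2 ^ 2 := by norm_num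
      _ ≤ 2 ^ h := Nat.pow_le_pow_right (by norm_num) hh
  have e1 : 2 ^ ν = 2 ^ (ν - h) * 2 ^ h := by rw [← pow_add]; congr 1; omega
  have e2 : 2 ^ ν = 2 * 2 ^ (ν - 1) := by rw [← pow_succ']; congr 1; omega
  have e3 : 2 ^ (ν - 1) = 2 ^ (ν - 1 - h) * 2 ^ h := by rw [← pow_add]; congr 1; omega
  have e4 : 2 ^ h = 2 * 2 ^ (h - 1) := by rw [← pow_succ']; congr 1; omega
  have e5 : 2 ^ (h + 1) = 2 * 2 ^ h := by ring
  have ph1 : 1 ≤ 2 ^ (h - 1) := Nat.one_le_two_pow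
  have hn2 : 1 ≤ n ^ 2 := Nat.one_le_pow _ _ (by omega)
  have hnb : n < 2 ^ h := by omega
  have hmono1 : 2 ^ h ≤ 2 ^ (ν - h) := Nat.pow_le_pow_right (by norm_num) (by omega)
  have hmono2 : 2 ^ h ≤ 2 ^ (ν - 1 - h) := Nat.pow_le_pow_right (by norm_num) (by omega)
  have hmono3 : 2 ^ h ≤ 2 ^ ν := Nat.pow_le_pow_right (by norm_num) (by omega)
  have hmono4 : n ≤ 2 ^ (ν - 1 - h) := by omega
  have hD1 : 2 ^ ν ≤ n * 2 ^ ν := Nat.le_mul_of_pos_left _ hn1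
  have hD2 : 2 ^ ν ≤ n ^ 2 * 2 ^ ν := Nat.le_mul_of_pos_left _ hn2
  have hD3 : 2 ^ (ν - 1) ≤ n ^ 2 * 2 ^ (ν - 1) := Nat.le_mul_of_pos_left _ hn2
  have c1 : 2 ^ h - 1 ≤ n * 2 ^ ν := by omega
  -- c4 : n * (2^h - 1) < 2^(ν-1)
  have c4 : n * (2 ^ h - 1) < 2 ^ (ν - 1) := by
    calc n * (2 ^ h - 1) ≤ n * 2 ^ h := Nat.mul_le_mul (le_refl n) (by omega)
      _ < 2 ^ h * 2 ^ h := Nat.mul_lt_mul_of_pos_right hnb (by omega)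
      _ ≤ 2 ^ (ν - 1 - h) * 2 ^ h := Nat.mul_le_mul_right _ hmono2
      _ = 2 ^ (ν - 1) := e3.symm
  have c2 : 2 * n * (2 ^ h - 1) ≤ n ^ 2 * 2 ^ ν := by
    have h1 : 2 * n * (2 ^ h - 1) = 2 * (n * (2 ^ h - 1)) := by ring
    omega
  have c3 : n * (2 ^ h - 1) ≤ n ^ 2 * 2 ^ (ν - 1) := by omega
  -- Part 1
  have key1 : n * 2 ^ ν - (2 ^ h - 1)
      = (n - 1) * 2 ^ ν + ((2 ^ (ν - h) - 1) * 2 ^ h + 1) := by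
    zify [c1, hn1, (show (1:ℕ) ≤ 2 ^ (ν - h) by omega), (show (1:ℕ) ≤ 2 ^ h by omega)]
    have e1' : (2 : ℤ) ^ ν = 2 ^ (ν - h) * 2 ^ h := by exact_mod_cast e1
    rw [e1']; ring
  have inlt : (2 ^ (ν - h) - 1) * 2 ^ h + 1 < 2 ^ ν := by
    have h1 : (2 ^ (ν - h) - 1) * 2 ^ h = 2 ^ (ν - h) * 2 ^ h - 2 ^ h := by
      rw [Nat.sub_mul, one_mul]
    omega
  have B1 : B 1 = 1 := by norm_num [B]
  have part1 : B (n * 2 ^ ν - (2 ^ h - 1)) = B (n - 1) + (ν - h + 1) := by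
    rw [key1, B_split _ _ _ inlt, B_split _ _ _ (show 1 < 2 ^ h by omega),
      B_pow_sub_one, B1]
  have hBn : B n = B (n - 1) + 1 := B_odd n hodd
  -- Part 2
  have s1 : (n * 2 ^ ν - (2 ^ h - 1)) ^ 2
      = (n ^ 2 * 2 ^ ν - 2 * n * (2 ^ h - 1)) * 2 ^ ν + (2 ^ h - 1) ^ 2 := by
    zify [c1, c2, (show (1:ℕ) ≤ 2 ^ h by omega)]
    ring
  have msq : (2 ^ h - 1) ^ 2 < 2 ^ ν := by
    calc (2 ^ h - 1) ^ 2 < (2 ^ h) ^ 2 := Nat.pow_lt_pow_left (by omega) (by norm_num)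
      _ = 2 ^ h * 2 ^ h := by ring
      _ ≤ 2 ^ (ν - h) * 2 ^ h := Nat.mul_le_mul_right _ hmono1
      _ = 2 ^ ν := e1.symm
  have s3 : n ^ 2 * 2 ^ ν - 2 * n * (2 ^ h - 1)
      = 2 * (n ^ 2 * 2 ^ (ν - 1) - n * (2 ^ h - 1)) + 0 := by
    zify [c2, c3, (show (1:ℕ) ≤ 2 ^ h by omega)]
    have e2' : (2 : ℤ) ^ ν = 2 * 2 ^ (ν - 1) := by exact_mod_cast e2
    rw [e2']; ring
  have s4 : n ^ 2 * 2 ^ (ν - 1) - n * (2 ^ h - 1)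
      = (n ^ 2 - 1) * 2 ^ (ν - 1) + (2 ^ (ν - 1) - n * (2 ^ h - 1)) := by
    zify [c4.le, c3, hn2, (show (1:ℕ) ≤ 2 ^ h by omega)]
    ring
  have s6 : 2 ^ (ν - 1) - n * (2 ^ h - 1) = (2 ^ (ν - 1 - h) - n) * 2 ^ h + n := by
    zify [c4.le, hmono4, (show (1:ℕ) ≤ 2 ^ h by omega)]
    have e3' : (2 : ℤ) ^ (ν - 1) = 2 ^ (ν - 1 - h) * 2 ^ h := by exact_mod_cast e3
    rw [e3']; ring
  have s6b : 2 ^ (ν - 1) - n * (2 ^ h - 1) < 2 ^ (ν - 1) := by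
    have h1 : 0 < n * (2 ^ h - 1) := Nat.mul_pos (by omega) (by omega)
    omega
  have s8 : B (2 ^ (ν - 1 - h) - n) + B (n - 1) = ν - 1 - h := by
    have hx : n - 1 < 2 ^ (ν - 1 - h) := by omega
    have hc := B_compl (ν - 1 - h) (n - 1) hx
    rw [show 2 ^ (ν - 1 - h) - 1 - (n - 1) = 2 ^ (ν - 1 - h) - n from by omega] at hc
    omega
  have s11 : B ((2 ^ h - 1) ^ 2) = h := by
    have key : (2 ^ h - 1) ^ 2 = (2 ^ (h - 1) - 1) * 2 ^ (h + 1) + 1 := by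
      zify [ph1, (show (1:ℕ) ≤ 2 ^ h by omega)]
      have e4' : (2 : ℤ) ^ h = 2 * 2 ^ (h - 1) := by exact_mod_cast e4
      have e5' : (2 : ℤ) ^ (h + 1) = 4 * 2 ^ (h - 1) := by
        rw [show h + 1 = (h - 1) + 2 from by omega, pow_add]; ring
      rw [e4', e5']; ring
    have hlt : 1 < 2 ^ (h + 1) := by omega
    rw [key, B_split _ _ _ hlt, B_pow_sub_one, B1]
    omega
  have part2 : B ((n * 2 ^ ν - (2 ^ h - 1)) ^ 2)
      = B (n ^ 2 - 1) + (B (2 ^ (ν - 1 - h) - n) + B n) + h := by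
    rw [s1, B_split _ _ _ msq, s11, s3, B_bit _ _ (by omega), s4,
      B_split _ _ _ s6b, s6, B_split _ _ _ hnb]
    omega
  have hBn2 : B (n ^ 2) = B (n ^ 2 - 1) + 1 := B_odd _ (hodd.pow)
  constructor
  · omega
  · omega
end
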